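/- Let (Ω, (∅, I₁^{nh}), Adm) be a geometric variational problem on π : E = ℝ × N → ℝ with co-oriented nonholonomic constraints I₁^{nh} = ⟨η¹,…,η^k⟩ (η¹,…,η^k, τ pointwise linearly independent). Choose R_α with i_{R_α}τ = 0, i_{R_α}η^β = δ_α^β, and set Ω̄ = Ω + (i_{R_α}Ω) ∧ η^α. Let E' = E × ℝ^k with coordinates p_α, π' : E' → E the projection, Ω' = π'*Ω, η'^α = π'*(η^α), and Ω_U = Ω' + dp_α ∧ η'^α. Then the GVP (Ω_U, ∅, Γ(V(π∘π'))) is an extension of the GVP (Ω̄, (∅, I₁^{nh}), Γ(V(π))): the map γ' ↦ π'∘γ' sends Sol(Ω_U, ∅, Γ(V(π∘π'))) onto Sol(Ω̄, (∅, I₁^{nh}), Γ(V(π))). -/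

import Mathlib

/-!
At a point, a vertical variation `(u, q)` of `Ω_U` along a curve with velocity `(v, ṗ)` reads
`Ω(u, v) + q_α ηᵅ(v) - ṗ_α ηᵅ(u)`. Varying `q` alone gives the constraints `ηᵅ(v) = 0`; then
`u = R_α` forces `ṗ_α = Ω(R_α, v)`, and with these two facts the remaining equations are exactly
those of `Ω̄` on a velocity satisfying the constraints. Conversely, a solution of the constrained
problem lifts to `E'` by integrating `ṗ_α = Ω(R_α, γ̇)` along it.
-/

open MeasureTheory Set Finset
open scoped ContDiff

noncomputable section

namespace VPGeom

variable {E : Type*} [NormedAddCommGroup E] [NormedSpace ℝ E]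

/-- A smooth `k`-form in the function model: jointly smooth and, at each point,
given by an alternating multilinear map on the tangent space. -/
def IsFormK (k : ℕ) (α : E → (Fin k → E) → ℝ) : Prop :=
  ContDiff ℝ ∞ (fun p : E × (Fin k → E) => α p.1 p.2) ∧
    ∀ x : E, ∃ m : AlternatingMap ℝ E ℝ (Fin k), ∀ v, α x v = m v

/-- A smooth `1`-form in the function model. -/
def IsForm1 (θ : E → E → ℝ) : Prop :=
  ContDiff ℝ ∞ (fun p : E × E => θ p.1 p.2) ∧ ∀ x : E, IsLinearMap ℝ (θ x)

/-- A smooth `2`-form in the function model. -/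
def IsForm2 (Ω : E → E → E → ℝ) : Prop :=
  ContDiff ℝ ∞ (fun p : E × E × E => Ω p.1 p.2.1 p.2.2) ∧
    ∀ x : E, ∃ m : AlternatingMap ℝ E ℝ (Fin 2), ∀ u v : E, Ω x u v = m ![u, v]

/-- Exterior derivative of a `1`-form on a vector space
(formula with constant extensions of the tangent vectors). -/
def extd1 (θ : E → E → ℝ) : E → E → E → ℝ := fun x u v =>
  fderiv ℝ (fun y => θ y v) x u - fderiv ℝ (fun y => θ y u) x v

/-- Exterior derivative of a `2`-form on a vector space. -/
def extd2 (Ω : E → E → E → ℝ) : E → E → E → E → ℝ := fun x u v w =>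
  fderiv ℝ (fun y => Ω y v w) x u - fderiv ℝ (fun y => Ω y u w) x v +
    fderiv ℝ (fun y => Ω y u v) x w

/-- Lie derivative of a `1`-form along a vector field (on a vector space). -/
def lie1 (ξ : E → E) (θ : E → E → ℝ) : E → E → ℝ := fun x v =>
  fderiv ℝ (fun y => θ y v) x (ξ x) + θ x (fderiv ℝ ξ x v)

/-- Wedge product of two `1`-forms. -/
def wedge11 (α β : E → E → ℝ) : E → E → E → ℝ := fun x u v =>
  α x u * β x v - α x v * β x u

/-- Wedge product of a `2`-form with a `1`-form. -/
def wedge21 (β : E → E → E → ℝ) (α : E → E → ℝ) : E → E → E → E → ℝ := fun x u v w =>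
  β x u v * α x w - β x u w * α x v + β x v w * α x u

/-- Wedge product of a `1`-form with a `2`-form. -/
def wedge12 (α : E → E → ℝ) (β : E → E → E → ℝ) : E → E → E → E → ℝ := fun x u v w =>
  α x u * β x v w - α x v * β x u w + α x w * β x u v

/-- Interior product of a vector field with a `2`-form. -/
def iota2 (ξ : E → E) (Ω : E → E → E → ℝ) : E → E → ℝ := fun x v => Ω x (ξ x) v

/-- `γ` is a smooth local section, over the open interval `I`, of the bundle over `ℝ`
whose projection ("time coordinate") is `T`. -/
structure IsSection (T : E → ℝ) (γ : ℝ → E) (I : Set ℝ) : Prop where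
  isOpen : IsOpen I
  ordConnected : I.OrdConnected
  nonempty : I.Nonempty
  smooth : ContDiffOn ℝ ∞ γ I
  proj : ∀ t ∈ I, T (γ t) = t

/-- Membership in the `C^∞(E)`-ideal generated by a set of functions. -/
def InIdeal (I₀ : Set (E → ℝ)) (h : E → ℝ) : Prop :=
  ∃ (m : ℕ) (f : Fin m → E → ℝ) (g : Fin m → E → ℝ),
    (∀ j, ContDiff ℝ ∞ (f j)) ∧ (∀ j, g j ∈ I₀) ∧ h = fun x => ∑ j, f j x * g j x

end VPGeom

namespace VPGeom

variable {N : Type*} [NormedAddCommGroup N] [NormedSpace ℝ N]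

/-- Solution sections on `E = ℝ × N` of a GVP with nonholonomic constraints
`I₁ⁿʰ = ⟨η¹,…,ηᵏ⟩` and vertical variations. -/
def IsSolBase {k : ℕ} (Ω : (ℝ × N) → (ℝ × N) → (ℝ × N) → ℝ)
    (η : Fin k → (ℝ × N) → (ℝ × N) → ℝ) (γ : ℝ → ℝ × N) (I : Set ℝ) : Prop :=
  IsSection Prod.fst γ I ∧
  (∀ a : Fin k, ∀ t ∈ I, η a (γ t) (deriv γ t) = 0) ∧
  ∀ ξ : (ℝ × N) → ℝ × N, ContDiff ℝ ∞ ξ → (∀ x, (ξ x).1 = 0) →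
    ∀ t ∈ I, Ω (γ t) (ξ (γ t)) (deriv γ t) = 0

/-- Solution sections on `E' = E × ℝᵏ` of the unconstrained GVP `(Ω_U, ∅, Γ(V(π∘π')))`. -/
def IsSolUp {k : ℕ} (ΩU : ((ℝ × N) × (Fin k → ℝ)) → ((ℝ × N) × (Fin k → ℝ)) →
      ((ℝ × N) × (Fin k → ℝ)) → ℝ)
    (γ' : ℝ → (ℝ × N) × (Fin k → ℝ)) (I : Set ℝ) : Prop :=
  IsSection (fun x => x.1.1) γ' I ∧
  ∀ ξ : ((ℝ × N) × (Fin k → ℝ)) → (ℝ × N) × (Fin k → ℝ),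
    ContDiff ℝ ∞ ξ → (∀ x, (ξ x).1.1 = 0) →
      ∀ t ∈ I, ΩU (γ' t) (ξ (γ' t)) (deriv γ' t) = 0

section Pointwise

variable {V : Type*} {k : ℕ} (vert : V → Prop) (β : V → V → ℝ) (θ : Fin k → V → ℝ)

/-- The equations of `Ω_U` at a point, for the velocity `(v, c)` and all vertical `(u, q)`. -/
def UpEqns (v : V) (c : Fin k → ℝ) : Prop :=
  ∀ u, vert u → ∀ q : Fin k → ℝ, β u v + ∑ a, (q a * θ a v - c a * θ a u) = 0

/-- The constraints and the equations of `Ω̄ = β + (i_{ρ_α} β) ∧ θᵅ` at a point. -/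
def BaseEqns (ρ : Fin k → V) (v : V) : Prop :=
  (∀ a, θ a v = 0) ∧
    ∀ u, vert u → β u v + ∑ a, (β (ρ a) u * θ a v - β (ρ a) v * θ a u) = 0

def ReducedEqns (v : V) (c : Fin k → ℝ) : Prop :=
  ∀ u, vert u → β u v = ∑ a, c a * θ a u

variable {vert β θ}

theorem upEqns_iff [Zero V] (h0 : vert 0) {v : V} {c : Fin k → ℝ} :
    UpEqns vert β θ v c ↔ (∀ a, θ a v = 0) ∧ ReducedEqns vert β θ v c := by
  constructor
  · intro h
    refine ⟨fun a => ?_, fun u hu => ?_⟩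
    · -- the equation is affine in `q`: compare `q = Pi.single a 1` with `q = 0` at `u = 0`
      have h₁ := h 0 h0 (Pi.single a 1)
      have h₂ := h 0 h0 0
      simp only [Pi.single_apply, ite_mul, one_mul, zero_mul, Finset.sum_sub_distrib,
        Finset.sum_ite_eq', Finset.mem_univ, if_true, Pi.zero_apply, Finset.sum_const_zero]
        at h₁ h₂
      linarith
    · have h₀ := h u hu 0
      simp only [Pi.zero_apply, zero_mul, zero_sub, Finset.sum_neg_distrib] at h₀
      linarith
  · rintro ⟨hθ, hred⟩ u hu q
    simp [hθ, hred u hu]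

theorem baseEqns_iff {ρ : Fin k → V} {v : V} :
    BaseEqns vert β θ ρ v ↔ (∀ a, θ a v = 0) ∧ ReducedEqns vert β θ v (fun a => β (ρ a) v) :=
  and_congr_right fun hθ => forall₂_congr fun u _ => by
    simp [hθ, Finset.sum_neg_distrib, ← sub_eq_add_neg, sub_eq_zero]

theorem ReducedEqns.eq_coeff {ρ : Fin k → V} {v : V} {c : Fin k → ℝ} (hρ : ∀ a, vert (ρ a))
    (hθρ : ∀ a b, θ b (ρ a) = if a = b then 1 else 0) (h : ReducedEqns vert β θ v c) :
    c = fun a => β (ρ a) v :=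
  funext fun a => by simp [h _ (hρ a), hθρ]

theorem upEqns_iff_baseEqns [Zero V] (h0 : vert 0) {ρ : Fin k → V} (hρ : ∀ a, vert (ρ a))
    (hθρ : ∀ a b, θ b (ρ a) = if a = b then 1 else 0) {v : V} {c : Fin k → ℝ} :
    UpEqns vert β θ v c ↔ BaseEqns vert β θ ρ v ∧ c = fun a => β (ρ a) v := by
  rw [upEqns_iff h0, baseEqns_iff]
  constructor
  · rintro ⟨hθ, hred⟩
    obtain rfl := hred.eq_coeff hρ hθρ
    exact ⟨⟨hθ, hred⟩, rfl⟩
  · rintro ⟨h, rfl⟩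
    exact h

end Pointwise

section Sections

variable {E F : Type*} [NormedAddCommGroup E] [NormedSpace ℝ E]
  [NormedAddCommGroup F] [NormedSpace ℝ F]

theorem forall_field_iff_forall_vector (vert : E → Prop) (γ : ℝ → E) (I : Set ℝ)
    (P : ℝ → E → Prop) :
    (∀ ξ : E → E, ContDiff ℝ ∞ ξ → (∀ x, vert (ξ x)) → ∀ t ∈ I, P t (ξ (γ t))) ↔
      ∀ t ∈ I, ∀ w, vert w → P t w :=
  ⟨fun h t ht w hw => h (fun _ => w) contDiff_const (fun _ => hw) t ht,
    fun h _ _ hξ t ht => h t ht _ (hξ _)⟩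

theorem exists_contDiffOn_hasDerivAt [CompleteSpace F] {g : ℝ → F} {I : Set ℝ}
    (hI : IsOpen I) (hI' : I.OrdConnected) (hne : I.Nonempty) (hg : ContDiffOn ℝ ∞ g I) :
    ∃ p : ℝ → F, ContDiffOn ℝ ∞ p I ∧ ∀ t ∈ I, HasDerivAt p (g t) t := by
  obtain ⟨t₀, ht₀⟩ := hne
  have hp : ∀ t ∈ I, HasDerivAt (fun t => ∫ s in t₀..t, g s) (g t) t := fun t ht =>
    intervalIntegral.integral_hasDerivAt_right
      (hg.continuousOn.mono (hI'.uIcc_subset ht₀ ht)).intervalIntegrable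
      (hg.continuousOn.stronglyMeasurableAtFilter hI t ht)
      (hg.continuousOn.continuousAt (hI.mem_nhds ht))
  refine ⟨_, ?_, hp⟩
  rw [contDiffOn_infty_iff_deriv_of_isOpen hI]
  exact ⟨fun t ht => (hp t ht).differentiableAt.differentiableWithinAt,
    hg.congr fun t ht => (hp t ht).deriv⟩

namespace IsSection

variable {T : E → ℝ} {I : Set ℝ}

theorem hasDerivAt {γ : ℝ → E} (h : IsSection T γ I) {t : ℝ} (ht : t ∈ I) :
    HasDerivAt γ (deriv γ t) t :=
  ((h.smooth.contDiffAt (h.isOpen.mem_nhds ht)).differentiableAt (by simp)).hasDerivAt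

theorem contDiffOn_deriv {γ : ℝ → E} (h : IsSection T γ I) : ContDiffOn ℝ ∞ (deriv γ) I :=
  h.smooth.deriv_of_isOpen h.isOpen (by simp)

theorem fst {γ : ℝ → E × F} (h : IsSection (fun x => T x.1) γ I) :
    IsSection T (fun t => (γ t).1) I :=
  ⟨h.isOpen, h.ordConnected, h.nonempty, contDiff_fst.comp_contDiffOn h.smooth, h.proj⟩

theorem deriv_fst {γ : ℝ → E × F} (h : IsSection (fun x => T x.1) γ I) {t : ℝ} (ht : t ∈ I) :
    deriv (fun s => (γ s).1) t = (deriv γ t).1 :=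
  ((ContinuousLinearMap.fst ℝ E F).hasFDerivAt.comp_hasDerivAt t (h.hasDerivAt ht)).deriv

theorem exists_lift [CompleteSpace F] {γ : ℝ → E} (h : IsSection T γ I) {c : ℝ → F}
    (hc : ContDiffOn ℝ ∞ c I) :
    ∃ p : ℝ → F, IsSection (fun x : E × F => T x.1) (fun t => (γ t, p t)) I ∧
      ∀ t ∈ I, deriv (fun t => (γ t, p t)) t = (deriv γ t, c t) := by
  obtain ⟨p, hp, hpc⟩ := exists_contDiffOn_hasDerivAt h.isOpen h.ordConnected h.nonempty hc
  exact ⟨p, ⟨h.isOpen, h.ordConnected, h.nonempty, h.smooth.prodMk hp, h.proj⟩,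
    fun t ht => ((h.hasDerivAt ht).prodMk (hpc t ht)).deriv⟩

end IsSection

end Sections

section Solutions

variable {k : ℕ} {Ω : (ℝ × N) → (ℝ × N) → (ℝ × N) → ℝ} {η : Fin k → (ℝ × N) → (ℝ × N) → ℝ}

theorem isSolBase_iff {R : Fin k → (ℝ × N) → ℝ × N} {OmgBar : (ℝ × N) → (ℝ × N) → (ℝ × N) → ℝ}
    (hOmgBar : ∀ x u v, OmgBar x u v = Ω x u v + ∑ a, wedge11 (iota2 (R a) Ω) (η a) x u v)
    {γ : ℝ → ℝ × N} {I : Set ℝ} :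
    IsSolBase OmgBar η γ I ↔ IsSection Prod.fst γ I ∧ ∀ t ∈ I,
      BaseEqns (fun u : ℝ × N => u.1 = 0) (Ω (γ t)) (fun a => η a (γ t)) (fun a => R a (γ t))
        (deriv γ t) := by
  unfold IsSolBase BaseEqns
  rw [forall_field_iff_forall_vector (fun u : ℝ × N => u.1 = 0) γ I
    (fun t w => OmgBar (γ t) w (deriv γ t) = 0)]
  simp only [hOmgBar, wedge11, iota2]
  exact and_congr_right fun _ =>
    ⟨fun ⟨hc, hv⟩ t ht => ⟨fun a => hc a t ht, hv t ht⟩,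
      fun h => ⟨fun a t ht => (h t ht).1 a, fun t ht => (h t ht).2⟩⟩

theorem isSolUp_iff
    {OmgU : ((ℝ × N) × (Fin k → ℝ)) → ((ℝ × N) × (Fin k → ℝ)) → ((ℝ × N) × (Fin k → ℝ)) → ℝ}
    (hOmgU : ∀ x u v, OmgU x u v =
      Ω x.1 u.1 v.1 + ∑ a, (u.2 a * η a x.1 v.1 - v.2 a * η a x.1 u.1))
    {γ' : ℝ → (ℝ × N) × (Fin k → ℝ)} {I : Set ℝ} :
    IsSolUp OmgU γ' I ↔ IsSection (fun x => x.1.1) γ' I ∧ ∀ t ∈ I,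
      UpEqns (fun u : ℝ × N => u.1 = 0) (Ω (γ' t).1) (fun a => η a (γ' t).1)
        (deriv γ' t).1 (deriv γ' t).2 := by
  unfold IsSolUp UpEqns
  rw [forall_field_iff_forall_vector (fun w : (ℝ × N) × (Fin k → ℝ) => w.1.1 = 0) γ' I
    (fun t w => OmgU (γ' t) w (deriv γ' t) = 0)]
  simp only [hOmgU]
  exact and_congr_right fun _ => forall₂_congr fun _ _ =>
    ⟨fun h u hu q => h (u, q) hu, fun h w hw => h w.1 hw w.2⟩

end Solutions

theorem absorption_nonholonomic_general {k : ℕ}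
    (Ω : (ℝ × N) → (ℝ × N) → (ℝ × N) → ℝ) (hΩ : IsForm2 Ω)
    (η : Fin k → (ℝ × N) → (ℝ × N) → ℝ)
    (R : Fin k → (ℝ × N) → ℝ × N) (hR : ∀ a, ContDiff ℝ ∞ (R a))
    (hRτ : ∀ a x, (R a x).1 = 0)
    (hRη : ∀ a b x, η b x (R a x) = if a = b then 1 else 0)
    (OmgBar : (ℝ × N) → (ℝ × N) → (ℝ × N) → ℝ)
    (hOmgBar : ∀ x u v, OmgBar x u v =
      Ω x u v + ∑ a, wedge11 (iota2 (R a) Ω) (η a) x u v)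
    (OmgU : ((ℝ × N) × (Fin k → ℝ)) → ((ℝ × N) × (Fin k → ℝ)) →
      ((ℝ × N) × (Fin k → ℝ)) → ℝ)
    (hOmgU : ∀ x u v, OmgU x u v =
      Ω x.1 u.1 v.1 + ∑ a, (u.2 a * η a x.1 v.1 - v.2 a * η a x.1 u.1)) :
    (∀ (γ' : ℝ → (ℝ × N) × (Fin k → ℝ)) (I : Set ℝ), IsSolUp OmgU γ' I →
        IsSolBase OmgBar η (fun t => (γ' t).1) I) ∧
    (∀ (γ : ℝ → ℝ × N) (I : Set ℝ), IsSolBase OmgBar η γ I →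
        ∃ γ' : ℝ → (ℝ × N) × (Fin k → ℝ), IsSolUp OmgU γ' I ∧ ∀ t ∈ I, (γ' t).1 = γ t) := by
  have key (x : ℝ × N) {v c} :=
    upEqns_iff_baseEqns (vert := fun u : ℝ × N => u.1 = 0) (β := Ω x) (θ := fun a => η a x)
      (v := v) (c := c) rfl (fun a => hRτ a x) (fun a b => hRη a b x)
  constructor
  · rintro γ' I h
    rw [isSolUp_iff hOmgU] at h
    refine (isSolBase_iff hOmgBar).2 ⟨h.1.fst (T := Prod.fst), fun t ht => ?_⟩
    rw [h.1.deriv_fst (T := Prod.fst) ht]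
    exact ((key _).1 (h.2 t ht)).1
  · rintro γ I h
    rw [isSolBase_iff hOmgBar] at h
    have hc : ContDiffOn ℝ ∞ (fun t a => Ω (γ t) (R a (γ t)) (deriv γ t)) I :=
      contDiffOn_pi.2 fun a => hΩ.1.comp_contDiffOn <| h.1.smooth.prodMk <|
        ((hR a).comp_contDiffOn h.1.smooth).prodMk h.1.contDiffOn_deriv
    obtain ⟨p, hsec, hderiv⟩ := h.1.exists_lift hc
    refine ⟨_, (isSolUp_iff hOmgU).2 ⟨hsec, fun t ht => ?_⟩, fun _ _ => rfl⟩
    rw [hderiv t ht]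
    exact (key _).2 ⟨h.2 t ht, rfl⟩

/-- With `Ω̄ = Ω + (i_{R_α}Ω) ∧ ηᵅ` on `E` and
`Ω_U = Ω' + dp_α ∧ η'ᵅ` on `E' = E × ℝᵏ`, the GVP `(Ω_U, ∅, Γ(V(π∘π')))` is an extension of
the GVP `(Ω̄, (∅, I₁ⁿʰ), Γ(V(π)))`: composition with `π'` maps its solutions onto the
solutions of the latter. -/
theorem absorption_nonholonomic {k : ℕ}
    (Ω : (ℝ × N) → (ℝ × N) → (ℝ × N) → ℝ) (hΩ : IsForm2 Ω)
    (η : Fin k → (ℝ × N) → (ℝ × N) → ℝ) (hη : ∀ a, IsForm1 (η a))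
    -- co-orientation
    (hcoor : ∀ x : ℝ × N, LinearIndependent ℝ
      (Fin.cons (fun v : ℝ × N => v.1) (fun a => η a x) : Fin (k + 1) → (ℝ × N) → ℝ))
    (R : Fin k → (ℝ × N) → ℝ × N) (hR : ∀ a, ContDiff ℝ ∞ (R a))
    (hRτ : ∀ a x, (R a x).1 = 0)
    (hRη : ∀ a b x, η b x (R a x) = if a = b then 1 else 0)
    (OmgBar : (ℝ × N) → (ℝ × N) → (ℝ × N) → ℝ)
    (hOmgBar : ∀ x u v, OmgBar x u v =
      Ω x u v + ∑ a, wedge11 (iota2 (R a) Ω) (η a) x u v)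
    (OmgU : ((ℝ × N) × (Fin k → ℝ)) → ((ℝ × N) × (Fin k → ℝ)) →
      ((ℝ × N) × (Fin k → ℝ)) → ℝ)
    (hOmgU : ∀ x u v, OmgU x u v =
      Ω x.1 u.1 v.1 + ∑ a, (u.2 a * η a x.1 v.1 - v.2 a * η a x.1 u.1)) :
    (∀ (γ' : ℝ → (ℝ × N) × (Fin k → ℝ)) (I : Set ℝ), IsSolUp OmgU γ' I →
        IsSolBase OmgBar η (fun t => (γ' t).1) I) ∧
    (∀ (γ : ℝ → ℝ × N) (I : Set ℝ), IsSolBase OmgBar η γ I →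
        ∃ γ' : ℝ → (ℝ × N) × (Fin k → ℝ), IsSolUp OmgU γ' I ∧ ∀ t ∈ I, (γ' t).1 = γ t) :=
  absorption_nonholonomic_general Ω hΩ η R hR hRτ hRη OmgBar hOmgBar OmgU hOmgU

end VPGeom
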